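/- arXiv:2204.11624 — 7 statements merged into one kernel-verified Lean document; each statement's English description precedes it below -/
import Mathlib

section
/- The set of integer solutions to x² = yz is exactly the set of triples of the form (x, y, z) = (uvw, uv², uw²) for integers u, v, w. -/
/-
Write `y = g b` and `x = g w` with `g = gcd x y` and `b`, `w` coprime. Cancelling one `g` from
`g² w² = g b z` leaves `g w² = b z`, so `b ∣ g w²` and, `b` being prime to `w²`, `b ∣ g`. With
`g = b u` this gives `(x, y, z) = (u b w, u b², u w²)`.
-/

theorem exists_eq_mul_mul_of_sq_eq_mul {α : Type*} [CommMonoidWithZero α] [GCDMonoid α]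
    {x y z : α} (h : x ^ 2 = y * z) :
    ∃ u v w : α, x = u * v * w ∧ y = u * v ^ 2 ∧ z = u * w ^ 2 := by
  rcases eq_or_ne y 0 with rfl | hy
  · have hx : x = 0 := pow_eq_zero_iff two_ne_zero |>.mp (h.trans (zero_mul z))
    exact ⟨z, 0, 1, by simp [hx], by simp, by simp⟩
  obtain ⟨w, b, hx, hyb, hwb⟩ := extract_gcd x y
  set g := gcd x y
  have hg : g ≠ 0 := fun h0 => hy ((gcd_eq_zero_iff x y).mp h0).2
  have hb : b ≠ 0 := by rintro rfl; exact hy (by rw [hyb, mul_zero])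
  have hgw : g * w ^ 2 = b * z := by
    refine mul_left_cancel₀ hg ?_
    calc g * (g * w ^ 2) = x ^ 2 := by rw [hx, mul_pow, sq g, mul_assoc]
      _ = g * (b * z) := by rw [h, hyb, mul_assoc]
  obtain ⟨u, hu⟩ : b ∣ g :=
    (gcd_isUnit_iff_isRelPrime.mp hwb).symm.pow_right.dvd_of_dvd_mul_right ⟨z, hgw⟩
  refine ⟨u, b, w, ?_, ?_, ?_⟩
  · rw [hx, hu, mul_comm b u]
  · rw [hyb, hu, mul_comm b u, mul_assoc, sq]
  · refine mul_left_cancel₀ hb ?_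
    rw [← hgw, hu, mul_assoc]

theorem x_sq_eq_yz_param (x y z : ℤ) :
    x ^ 2 = y * z ↔ ∃ u v w : ℤ, x = u * v * w ∧ y = u * v ^ 2 ∧ z = u * w ^ 2 := by
  refine ⟨exists_eq_mul_mul_of_sq_eq_mul, ?_⟩
  rintro ⟨u, v, w, rfl, rfl, rfl⟩
  ring
end

section
/- The set of integer solutions to xy = zt is exactly the set of quadruples of the form (x, y, z, t) = (u₁u₂, u₃u₄, u₁u₃, u₂u₄) for integers u₁, u₂, u₃, u₄. -/
/-! Since `z ∣ x * y` and `ℤ` is a decomposition monoid (every element is primal), `z = z₁ * z₂`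
with `z₁ ∣ x` and `z₂ ∣ y`; cancelling `z` from `x * y = z * t` then identifies `t` as the
product of the two cofactors. -/

section Decomposition

variable {α : Type*} [CommMonoidWithZero α] [IsLeftCancelMulZero α] [DecompositionMonoid α]

theorem exists_four_mul_of_mul_eq_mul_of_ne_zero {x y z t : α} (h : x * y = z * t) (hz : z ≠ 0) :
    ∃ u₁ u₂ u₃ u₄ : α, x = u₁ * u₂ ∧ y = u₃ * u₄ ∧ z = u₁ * u₃ ∧ t = u₂ * u₄ := by
  obtain ⟨z₁, z₂, ⟨a, rfl⟩, ⟨b, rfl⟩, rfl⟩ := exists_dvd_and_dvd_of_dvd_mul ⟨t, h⟩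
  refine ⟨z₁, a, z₂, b, rfl, rfl, rfl, ?_⟩
  refine (mul_left_cancel₀ hz ?_).symm
  rw [← h, mul_mul_mul_comm]

theorem exists_four_mul_of_mul_eq_mul {x y z t : α} (h : x * y = z * t) :
    ∃ u₁ u₂ u₃ u₄ : α, x = u₁ * u₂ ∧ y = u₃ * u₄ ∧ z = u₁ * u₃ ∧ t = u₂ * u₄ := by
  rcases eq_or_ne z 0 with rfl | hz
  · rcases mul_eq_zero.mp (h.trans (zero_mul t)) with rfl | rfl
    · exact ⟨0, t, y, 1, by simp, by simp, by simp, by simp⟩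
    · exact ⟨x, 1, 0, t, by simp, by simp, by simp, by simp⟩
  · exact exists_four_mul_of_mul_eq_mul_of_ne_zero h hz

end Decomposition

theorem xy_eq_zt_param (x y z t : ℤ) :
    x * y = z * t ↔
      ∃ u₁ u₂ u₃ u₄ : ℤ, x = u₁ * u₂ ∧ y = u₃ * u₄ ∧ z = u₁ * u₃ ∧ t = u₂ * u₄ := by
  refine ⟨exists_four_mul_of_mul_eq_mul, ?_⟩
  rintro ⟨u₁, u₂, u₃, u₄, rfl, rfl, rfl, rfl⟩
  exact mul_mul_mul_comm u₁ u₂ u₃ u₄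
end

section
/- The equation y(x² - y) = z² + 1 has no integer solutions. -/
/-!
Both factors `y` and `x ^ 2 - y` are positive divisors of `z ^ 2 + 1`. Such a divisor is never
`3` mod `4` (the Jacobi symbol `J(-1 | d) = χ₄ d` would be `-1` although `-1` is a square mod `d`)
and never `0` mod `4` (as `z ^ 2 + 1` is not), and the two factors are not both even. Hence their
sum `x ^ 2` is `2` or `3` mod `4`, which no square is.
-/

theorem Int.sq_emod_four_eq_zero_or_one (n : ℤ) : n ^ 2 % 4 = 0 ∨ n ^ 2 % 4 = 1 := by
  rcases Int.even_or_odd n with ⟨k, rfl⟩ | hn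
  · left
    ring_nf
    omega
  · exact Or.inr (Int.sq_mod_four_eq_one_of_odd hn)

theorem Nat.mod_four_ne_three_of_dvd_sq_add_one {d : ℕ} {n : ℤ} (h : (d : ℤ) ∣ n ^ 2 + 1) :
    d % 4 ≠ 3 := by
  intro h3
  have hJ : jacobiSym (-1) d = -1 := by
    rw [jacobiSym.at_neg_one (Nat.odd_iff.mpr (by omega)), ZMod.χ₄_nat_three_mod_four h3]
  refine ZMod.nonsquare_of_jacobiSym_eq_neg_one hJ ⟨n, ?_⟩
  have hn : ((n ^ 2 + 1 : ℤ) : ZMod d) = 0 := (ZMod.intCast_zmod_eq_zero_iff_dvd _ _).mpr h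
  push_cast at hn ⊢
  linear_combination -hn

theorem Int.emod_four_eq_one_or_two_of_dvd_sq_add_one {d n : ℤ} (hd : 0 ≤ d)
    (h : d ∣ n ^ 2 + 1) : d % 4 = 1 ∨ d % 4 = 2 := by
  lift d to ℕ using hd
  have h3 := Nat.mod_four_ne_three_of_dvd_sq_add_one h
  have h4 : ¬ (4 : ℤ) ∣ d := fun h4 => by
    obtain ⟨k, hk⟩ := h4.trans h
    have := Int.sq_emod_four_eq_zero_or_one n
    omega
  omega

theorem no_solution_y_xsq_minus_y :
    ¬ ∃ x y z : ℤ, y * (x ^ 2 - y) = z ^ 2 + 1 := by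
  rintro ⟨x, y, z, h⟩
  have hprod : 0 < y * (x ^ 2 - y) := h ▸ by positivity
  have hy : 0 < y := by
    rcases pos_and_pos_or_neg_and_neg_of_mul_pos hprod with ⟨hy, -⟩ | ⟨hy, hb⟩
    · exact hy
    · linarith [sq_nonneg x]
  have hb : 0 < x ^ 2 - y := pos_of_mul_pos_right hprod hy.le
  have hy4 := Int.emod_four_eq_one_or_two_of_dvd_sq_add_one hy.le (Dvd.intro _ h)
  have hb4 := Int.emod_four_eq_one_or_two_of_dvd_sq_add_one hb.le (Dvd.intro_left _ h)
  have hz4 := Int.sq_emod_four_eq_zero_or_one z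
  have hx4 := Int.sq_emod_four_eq_zero_or_one x
  have hnot_both_even : ¬ (2 ∣ y ∧ 2 ∣ x ^ 2 - y) := fun ⟨h₁, h₂⟩ => by
    have h4 : (4 : ℤ) ∣ z ^ 2 + 1 := h ▸ mul_dvd_mul h₁ h₂
    omega
  omega
end

section
/- The only integer solutions to x² + y² + xyz - 2 = 0 are (x, y, z) = (±1, ±1, 0), i.e., the four solutions (1,1,0), (1,-1,0), (-1,1,0), (-1,-1,0). -/
/-!
The Vieta involution `x ↦ -y z - x` preserves the solutions of `x² + y² + x y z = 2` and
satisfies `x (-y z - x) = y² - 2`. So if `2 ≤ |y| ≤ |x|` it replaces `x` by a nonzero integer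
of absolute value `(y² - 2) / |x| < |y|`, and `|x| + |y|` strictly decreases. Descending, a
solution with `|x|, |y| ≥ 2` would lead to one with a coordinate of absolute value at most `1`;
but such a solution is `(±1, ±1, 0)`, and the other coordinate has not changed.
-/

namespace VietaJumping

lemma jump_eq {c x y z : ℤ} (h : x ^ 2 + y ^ 2 + x * y * z = c) :
    (-y * z - x) ^ 2 + y ^ 2 + (-y * z - x) * y * z = c := by
  linear_combination h

lemma jump_mul_eq {c x y z : ℤ} (h : x ^ 2 + y ^ 2 + x * y * z = c) :
    (-y * z - x) * x = y ^ 2 - c := by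
  linear_combination -h

lemma eq_of_abs_le_one {x y z : ℤ} (hx : |x| ≤ 1) (h : x ^ 2 + y ^ 2 + x * y * z = 2) :
    (x = 1 ∨ x = -1) ∧ (y = 1 ∨ y = -1) ∧ z = 0 := by
  have hx0 : x ≠ 0 := by
    rintro rfl
    have hyy : y * y = 2 := by linear_combination h
    exact Int.sq_ne_two_mod_four y (by rw [hyy]; rfl)
  have hx1 : x = 1 ∨ x = -1 := by rw [abs_le] at hx; omega
  have hxx : x * x = 1 := by rcases hx1 with rfl | rfl <;> rfl
  have hy : y * (y + x * z) = 1 := by linear_combination h - hxx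
  obtain ⟨hy1, hyz⟩ | ⟨hy1, hyz⟩ := Int.eq_one_or_neg_one_of_mul_eq_one' hy <;>
  · refine ⟨hx1, by omega, ?_⟩
    have hxz : x * z = 0 := by linarith
    exact (mul_eq_zero.mp hxz).resolve_left hx0

lemma abs_jump_lt {x y z : ℤ} (hy : 2 ≤ |y|) (hyx : |y| ≤ |x|)
    (h : x ^ 2 + y ^ 2 + x * y * z = 2) : |-y * z - x| < |y| := by
  have hmul : |-y * z - x| * |x| = y ^ 2 - 2 := by
    rw [← abs_mul, jump_mul_eq h, abs_of_nonneg (by nlinarith [sq_abs y])]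
  nlinarith [sq_abs y]

theorem ne_two_of_two_le_abs_of_abs_le {x y z : ℤ} (hy : 2 ≤ |y|) (hyx : |y| ≤ |x|) :
    x ^ 2 + y ^ 2 + x * y * z ≠ 2 := by
  induction hn : x.natAbs + y.natAbs using Nat.strong_induction_on generalizing x y with
  | _ n ih =>
  intro h
  have hlt := abs_jump_lt hy hyx h
  by_cases hx' : |-y * z - x| ≤ 1
  · obtain ⟨-, hy1, -⟩ := eq_of_abs_le_one hx' (jump_eq h)
    rcases hy1 with rfl | rfl <;> simp at hy
  · have hdec : y.natAbs + (-y * z - x).natAbs < n := by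
      simp only [Int.abs_eq_natAbs] at hlt hyx; omega
    exact ih _ hdec (by omega) hlt.le rfl (by linear_combination jump_eq h)

end VietaJumping

open VietaJumping

theorem vieta_jumping_equation (x y z : ℤ) :
    x ^ 2 + y ^ 2 + x * y * z - 2 = 0 ↔
      (x = 1 ∨ x = -1) ∧ (y = 1 ∨ y = -1) ∧ z = 0 := by
  rw [sub_eq_zero]
  constructor
  · intro h
    by_cases hx : |x| ≤ 1
    · exact eq_of_abs_le_one hx h
    by_cases hy : |y| ≤ 1
    · obtain ⟨hy1, hx1, hz⟩ := eq_of_abs_le_one (y := x) (z := z) hy (by linear_combination h)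
      exact ⟨hx1, hy1, hz⟩
    rcases le_total |y| |x| with hyx | hxy
    · exact absurd h (ne_two_of_two_le_abs_of_abs_le (by omega) hyx)
    · have h' : y ^ 2 + x ^ 2 + y * x * z = 2 := by linear_combination h
      exact absurd h' (ne_two_of_two_le_abs_of_abs_le (by omega) hxy)
  · rintro ⟨rfl | rfl, rfl | rfl, rfl⟩ <;> norm_num
end

section
/- The equation y² + z² = x³ - 1 has infinitely many integer solutions; in particular, for every integer t, the triple x = 4t⁴ + 8t³ + 12t² + 8t + 3, y = 8t⁵ + 24t⁴ + 40t³ + 38t² + 20t + 5, z = -(8t⁶ + 24t⁵ + 44t⁴ + 44t³ + 28t² + 8t + 1) is a solution. -/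
/-!
Put `s = t² + t + 1` and `x = 4 s² - 1`. Then `x² + x + 1 = x² + (2 s)²` and, as `(2 t + 1)² = 4 s - 3`,
also `x - 1 = (2 s - 1)² + (2 t + 1)²`; the product formula for sums of two squares turns
`x³ - 1 = (x - 1)(x² + x + 1)` into `y² + z²`. Since `x t > t`, the family is unbounded.
-/

namespace CubeMinusOneSumTwoSquares

def x (t : ℤ) : ℤ := 4 * t ^ 4 + 8 * t ^ 3 + 12 * t ^ 2 + 8 * t + 3

def y (t : ℤ) : ℤ := 8 * t ^ 5 + 24 * t ^ 4 + 40 * t ^ 3 + 38 * t ^ 2 + 20 * t + 5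

def z (t : ℤ) : ℤ := -(8 * t ^ 6 + 24 * t ^ 5 + 44 * t ^ 4 + 44 * t ^ 3 + 28 * t ^ 2 + 8 * t + 1)

theorem y_sq_add_z_sq (t : ℤ) : y t ^ 2 + z t ^ 2 = x t ^ 3 - 1 := by
  unfold x y z
  ring

theorem lt_x (t : ℤ) : t < x t := by
  unfold x
  nlinarith [sq_nonneg (t ^ 2 + t), sq_nonneg (t + 1), sq_nonneg t]

end CubeMinusOneSumTwoSquares

theorem y_sq_plus_z_sq_eq_x_cube_minus_one :
    (∀ N : ℤ, ∃ x y z : ℤ, y ^ 2 + z ^ 2 = x ^ 3 - 1 ∧ N < |x|) ∧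
    (∀ t : ℤ,
      (8 * t ^ 5 + 24 * t ^ 4 + 40 * t ^ 3 + 38 * t ^ 2 + 20 * t + 5) ^ 2 +
        (-(8 * t ^ 6 + 24 * t ^ 5 + 44 * t ^ 4 + 44 * t ^ 3 + 28 * t ^ 2 + 8 * t + 1)) ^ 2 =
        (4 * t ^ 4 + 8 * t ^ 3 + 12 * t ^ 2 + 8 * t + 3) ^ 3 - 1) := by
  open CubeMinusOneSumTwoSquares in
  exact ⟨fun N => ⟨x N, y N, z N, y_sq_add_z_sq N, (lt_x N).trans_le (le_abs_self _)⟩,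
    y_sq_add_z_sq⟩
end

section
/- For every integer t, the identity (3t+1)⁴ - 4(-3t² - 2t - 2)³ - 8 = (12t² + 8t + 25)(3t² + 2t + 1)² holds; consequently, if 12t² + 8t + 25 is a perfect square, then with x = -3t² - 2t - 2, z = 3t + 1, the discriminant z⁴ - 4x³ - 8 is a perfect square and the equation y(z² - y) = x³ + 2 has an integer solution y. -/
/-!
The discriminant factors as `(12t²+8t+25)(3t²+2t+1)²`, so it is a square once `12t²+8t+25 = s²`.
As `12t²+8t+25` is odd, so is `s`; hence `s(3t²+2t+1) ≡ 3t²+2t+1 ≡ (3t+1)² (mod 2)`, and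
`y = ((3t+1)² + s(3t²+2t+1))/2` is an integer root of `y² - (3t+1)²y + (x³+2)`.
-/

theorem Int.exists_mul_sub_eq_of_sq_sub_four_mul_eq_sq {a n d : ℤ} (h : a ^ 2 - 4 * n = d ^ 2)
    (hparity : Even (a + d)) : ∃ y : ℤ, y * (a - y) = n := by
  obtain ⟨y, hy⟩ := hparity
  obtain rfl : d = y + y - a := by omega
  exact ⟨y, mul_left_cancel₀ (four_ne_zero (α := ℤ)) (by linear_combination h)⟩

theorem cubic_discriminant_factorization (t : ℤ) :
    (3 * t + 1) ^ 4 - 4 * (-3 * t ^ 2 - 2 * t - 2) ^ 3 - 8 =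
      (12 * t ^ 2 + 8 * t + 25) * (3 * t ^ 2 + 2 * t + 1) ^ 2 := by
  ring

theorem discriminant_identity_h21b (t : ℤ) :
    (3 * t + 1) ^ 4 - 4 * (-3 * t ^ 2 - 2 * t - 2) ^ 3 - 8 =
      (12 * t ^ 2 + 8 * t + 25) * (3 * t ^ 2 + 2 * t + 1) ^ 2 ∧
    (IsSquare (12 * t ^ 2 + 8 * t + 25) →
      IsSquare ((3 * t + 1) ^ 4 - 4 * (-3 * t ^ 2 - 2 * t - 2) ^ 3 - 8) ∧
      ∃ y : ℤ, y * ((3 * t + 1) ^ 2 - y) = (-3 * t ^ 2 - 2 * t - 2) ^ 3 + 2) := by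
  refine ⟨cubic_discriminant_factorization t, ?_⟩
  rintro ⟨s, hs⟩
  set q := 3 * t ^ 2 + 2 * t + 1
  have hdisc : (3 * t + 1) ^ 4 - 4 * (-3 * t ^ 2 - 2 * t - 2) ^ 3 - 8 = (s * q) * (s * q) := by
    rw [cubic_discriminant_factorization, hs]
    ring
  have hss_odd : Odd (s * s) := hs ▸ ⟨6 * t ^ 2 + 4 * t + 12, by ring⟩
  obtain ⟨c, rfl⟩ := (Int.odd_mul.mp hss_odd).1
  have hparity : Even ((3 * t + 1) ^ 2 + (2 * c + 1) * q) :=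
    ⟨c * q + 6 * t ^ 2 + 4 * t + 1, by ring⟩
  exact ⟨⟨_, hdisc⟩,
    Int.exists_mul_sub_eq_of_sq_sub_four_mul_eq_sq (by linear_combination hdisc) hparity⟩
end

section
/- For every integer t, the identity ((6t² + 1)(6t))² - 4(6t² + 1)³ + 8 = 4(6t² - 1)²(3t² + 1) holds; consequently, if 3t² + 1 is a perfect square, then with x = 6t² + 1 and z = 6t the equation xyz = x³ + y² - 2 has an integer solution y. -/
/-! The discriminant of `y ↦ y ^ 2 - x z y + x ^ 3 - 2` at `x = 6t² + 1`, `z = 6t` factors as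
`(2 (6t² - 1))² (3t² + 1)`. When `3t² + 1 = s²` it is the square of the even number
`d = 2 (6t² - 1) s`, and `xz` is even too, so the root `y = (xz + d) / 2` is an integer. -/

theorem exists_mul_mul_eq_of_discriminant_eq_sq {x z d : ℤ}
    (hd : (x * z) ^ 2 - 4 * x ^ 3 + 8 = d ^ 2) (hparity : Even (x * z + d)) :
    ∃ y : ℤ, x * y * z = x ^ 3 + y ^ 2 - 2 := by
  obtain ⟨y, hy⟩ := hparity
  refine ⟨y, mul_left_cancel₀ (four_ne_zero (α := ℤ)) ?_⟩
  linear_combination (d - x * z + 2 * y) * hy + hd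

theorem discriminant_identity_h21c (t : ℤ) :
    ((6 * t ^ 2 + 1) * (6 * t)) ^ 2 - 4 * (6 * t ^ 2 + 1) ^ 3 + 8 =
      4 * (6 * t ^ 2 - 1) ^ 2 * (3 * t ^ 2 + 1) ∧
    (IsSquare (3 * t ^ 2 + 1) →
      ∃ y : ℤ, (6 * t ^ 2 + 1) * y * (6 * t) = (6 * t ^ 2 + 1) ^ 3 + y ^ 2 - 2) := by
  have hdisc : ((6 * t ^ 2 + 1) * (6 * t)) ^ 2 - 4 * (6 * t ^ 2 + 1) ^ 3 + 8 =
      4 * (6 * t ^ 2 - 1) ^ 2 * (3 * t ^ 2 + 1) := by ring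
  refine ⟨hdisc, ?_⟩
  rintro ⟨s, hs⟩
  apply exists_mul_mul_eq_of_discriminant_eq_sq (d := 2 * (6 * t ^ 2 - 1) * s)
  · rw [hdisc, hs]; ring
  · exact ⟨(6 * t ^ 2 + 1) * (3 * t) + (6 * t ^ 2 - 1) * s, by ring⟩
end
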